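/- arXiv:1501.02532 — 5 statements merged into one kernel-verified Lean document; each statement's English description precedes it below -/
import Mathlib

section
/- Let r_det > 0 and let f : ℝ³ → ℝ be continuous, compactly supported, and odd, i.e. f(−x) = −f(x) for all x ∈ ℝ³. Then R_P f(θ, t) = 0 for every θ ∈ S² and every t ≥ 0. -/
open MeasureTheory Filter Real
open scoped Topology RealInnerProductSpace

noncomputable section

abbrev E3 := EuclideanSpace ℝ (Fin 3)
abbrev E2 := EuclideanSpace ℝ (Fin 2)

def vec3 (a b c : ℝ) : E3 := (WithLp.equiv 2 (Fin 3 → ℝ)).symm ![a, b, c]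
def vec2 (a b : ℝ) : E2 := (WithLp.equiv 2 (Fin 2 → ℝ)).symm ![a, b]

/-- The great circle of the unit sphere in `ℝ³` orthogonal to `θ`. -/
def circleSet (θ : E3) : Set E3 := {α | α ∈ Metric.sphere (0:E3) 1 ∧ ⟪θ, α⟫ = 0}

/-- The Minkowski–Funk transform: integral over the great circle orthogonal to `θ`
with respect to one-dimensional Hausdorff (arc-length) measure. -/
def funkT (φ : E3 → ℝ) (θ : E3) : ℝ := ∫ α in circleSet θ, φ α ∂μH[1]

/-- The spherical Radon transform with centers on the sphere of radius `r`. -/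
def sphRadon (r : ℝ) (f : E3 → ℝ) (α : E3) (t : ℝ) : ℝ :=
  ∫ β in Metric.sphere (0:E3) 1, f (r • α + t • β) ∂μH[2]

/-- The transform `R_P` arising in PAT with circular integrating detectors. -/
def RP (r : ℝ) (f : E3 → ℝ) (θ : E3) (t : ℝ) : ℝ :=
  ∫ α in circleSet θ, (∫ β in Metric.sphere (0:E3) 1, f (r • α + t • β) ∂μH[2]) ∂μH[1]

/-- Rotation of a vector in `ℝ²` by `π/2`. -/
def perp (ω : E2) : E2 := vec2 (-(ω 1)) (ω 0)

/-- The two-dimensional Radon transform. -/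
def radon2 (Φ : E2 → ℝ) (ω : E2) (s : ℝ) : ℝ := ∫ ν : ℝ, Φ (s • ω + ν • perp ω)

/-- Principal value of `∫ F`, where the singular set is removed via `{s | ε < |e s|}`:
the limit as `ε → 0⁺` of the integrals over `{s | |e s| > ε}`. -/
def pv (F : ℝ → ℝ) (e : ℝ → ℝ) : ℝ :=
  limUnder (𝓝[>] (0:ℝ)) (fun ε => ∫ s in {s | ε < |e s|}, F s)

/-- The Hilbert transform `Hu(s) = (1/π) p.v. ∫ u(s')/(s-s') ds'`. -/
def hilbertT (u : ℝ → ℝ) (s : ℝ) : ℝ :=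
  (1/π) * pv (fun s' => u s' / (s - s')) (fun s' => s - s')

/-- The backprojection operator `R#u(x) = ∫_{S¹} u(ω, x·ω) dS(ω)`. -/
def backproj (u : E2 → ℝ → ℝ) (x : E2) : ℝ :=
  ∫ ω in Metric.sphere (0:E2) 1, u ω ⟪x, ω⟫ ∂μH[1]

/-- `R_P f = 0` for continuous compactly supported odd `f`. -/
theorem stmt1 (r : ℝ) (hr : 0 < r) (f : E3 → ℝ) (hf : Continuous f)
    (hsupp : HasCompactSupport f) (hodd : ∀ x : E3, f (-x) = -f x) :
    ∀ θ ∈ Metric.sphere (0:E3) 1, ∀ t : ℝ, 0 ≤ t → RP r f θ t = 0 := by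
  intro θ hθ t ht
  set e : E3 ≃ᵢ E3 := IsometryEquiv.neg E3 with he
  have he_apply : ∀ x : E3, e x = -x := fun x => rfl
  have hemb : MeasurableEmbedding (⇑e) := e.toHomeomorph.measurableEmbedding
  have hsphere : ⇑e ⁻¹' (Metric.sphere (0:E3) 1) = Metric.sphere (0:E3) 1 := by
    ext β
    simp only [Set.mem_preimage, mem_sphere_zero_iff_norm, he_apply, norm_neg]
  have hcirc : ⇑e ⁻¹' (circleSet θ) = circleSet θ := by
    ext α
    simp only [circleSet, Set.mem_preimage, Set.mem_setOf_eq, mem_sphere_zero_iff_norm,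
      he_apply, norm_neg, inner_neg_right, neg_eq_zero]
  set g : E3 → ℝ := fun α => ∫ β in Metric.sphere (0:E3) 1, f (r • α + t • β) ∂μH[2] with hg
  have hgodd : ∀ α : E3, g (-α) = -g α := by
    intro α
    have h1 := (e.measurePreserving_hausdorffMeasure 2).setIntegral_preimage_emb hemb
      (fun β => f (r • (-α) + t • β)) (Metric.sphere (0:E3) 1)
    rw [hsphere] at h1
    have h2 : ∀ β : E3, f (r • (-α) + t • (e β)) = -f (r • α + t • β) := by
      intro β
      rw [he_apply]
      rw [show r • (-α) + t • (-β) = -(r • α + t • β) by module]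
      exact hodd _
    calc g (-α) = ∫ β in Metric.sphere (0:E3) 1, f (r • (-α) + t • (e β)) ∂μH[2] := h1.symm
    _ = ∫ β in Metric.sphere (0:E3) 1, -f (r • α + t • β) ∂μH[2] := by
        simp only [h2]
    _ = -g α := by rw [integral_neg]
  have hflip := (e.measurePreserving_hausdorffMeasure 1).setIntegral_preimage_emb hemb
    g (circleSet θ)
  rw [hcirc] at hflip
  have hkey : RP r f θ t = -RP r f θ t := by
    calc RP r f θ t = ∫ α in circleSet θ, g (e α) ∂μH[1] := by rw [hflip]; rfl
    _ = ∫ α in circleSet θ, -g α ∂μH[1] := by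
        simp only [he_apply, hgodd]
    _ = -RP r f θ t := by rw [integral_neg]; rfl
  linarith
end
end

section
/- Let φ : S² → ℝ be continuous and even, and define Φ : ℝ² → ℝ by Φ(x₁,x₂) = 2·φ((x₁,x₂,1)/√(1+x₁²+x₂²)) / (1+x₁²+x₂²). Then for every ω ∈ S¹ and every s ∈ ℝ, RΦ(ω, s) = (1/√(1+s²)) · Fφ((ω₁, ω₂, −s)/√(1+s²)), where ω = (ω₁, ω₂). -/
open MeasureTheory Filter Real
open scoped Topology RealInnerProductSpace

noncomputable section

/-! The central projection `x ↦ (x, 1) / ‖(x, 1)‖` maps the line `{x : ⟪x, ω⟫ = s}` of the plane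
onto an open half of the great circle orthogonal to `θ = (ω, -s) / √(1 + s²)`. Parametrizing
that line by `ν = √(1 + s²) · tan t` and the great circle by arc length `t`, the weight
`2 / (1 + ‖x‖²)` times the Jacobian of the substitution is the constant `2 / √(1 + s²)`, and since
`φ` is even the half circle carries exactly half of the Funk integral.

The only non-elementary input is that one-dimensional Hausdorff measure on the unit circle of `ℂ`
is arc length. The pull-back of `μH[1]` to `AddCircle (2π)` is a finite translation-invariant
measure, hence a multiple `c` of Lebesgue measure; `c ≤ 1` because `t ↦ exp (t i)` is
1-Lipschitz, and `c ≥ 1` because projecting an arc of angle `2h` to the imaginary axis gives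
`2 sin h ≤ c · 2h`. -/

open Set Complex
open scoped ENNReal NNReal

instance : Fact (0 < 2 * π) := ⟨two_pi_pos⟩

def circleEmbedding (x : AddCircle (2 * π)) : ℂ := AddCircle.toCircle x

@[simp] lemma circleEmbedding_coe (t : ℝ) : circleEmbedding t = exp (t * I) := by
  rw [circleEmbedding, AddCircle.toCircle_apply_mk, Circle.coe_exp, div_self two_pi_pos.ne',
    one_mul]

lemma circleEmbedding_add (x y : AddCircle (2 * π)) :
    circleEmbedding (x + y) = circleEmbedding x * circleEmbedding y := by
  simp [circleEmbedding, AddCircle.toCircle_add]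

lemma norm_circleEmbedding (x : AddCircle (2 * π)) : ‖circleEmbedding x‖ = 1 := by
  simp [circleEmbedding, Circle.norm_coe]

lemma range_circleEmbedding : range circleEmbedding = Metric.sphere 0 1 := by
  refine Subset.antisymm ?_ fun z hz => ⟨arg z, ?_⟩
  · rintro _ ⟨x, rfl⟩
    simp [norm_circleEmbedding]
  · have := norm_mul_exp_arg_mul_I z
    rw [mem_sphere_zero_iff_norm.1 hz, ofReal_one, one_mul] at this
    rwa [circleEmbedding_coe]

lemma measurableEmbedding_circleEmbedding : MeasurableEmbedding circleEmbedding :=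
  ((continuous_subtype_val.comp AddCircle.continuous_toCircle).isClosedEmbedding
    (Subtype.val_injective.comp (AddCircle.injective_toCircle two_pi_pos.ne'))).measurableEmbedding

lemma lipschitzWith_exp_mul_I : LipschitzWith 1 fun t : ℝ => exp (t * I) := by
  refine LipschitzWith.of_dist_le_mul fun t s => ?_
  have h : exp (t * I) - exp (s * I) = exp (s * I) * (exp (I * ↑(t - s)) - 1) := by
    rw [mul_sub, ← Complex.exp_add, mul_one]; push_cast; ring_nf
  rw [dist_eq_norm, h, norm_mul, norm_exp_ofReal_mul_I, one_mul, NNReal.coe_one, one_mul,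
    Real.dist_eq]
  exact norm_exp_I_mul_ofReal_sub_one_le

lemma isometry_mul_left_of_norm_eq_one {w : ℂ} (hw : ‖w‖ = 1) : Isometry (w * ·) :=
  Isometry.of_dist_eq fun a b => by
    rw [dist_eq_norm, ← mul_sub, norm_mul, hw, one_mul, dist_eq_norm]

instance : Measure.IsAddLeftInvariant ((μH[1] : Measure ℂ).comap circleEmbedding) := by
  refine ⟨fun x => Measure.ext fun A hA => ?_⟩
  have himage : circleEmbedding '' ((x + ·) ⁻¹' A)
      = (circleEmbedding (-x) * ·) '' (circleEmbedding '' A) := by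
    rw [← neg_neg x, ← image_add_left, image_image, image_image, neg_neg]
    simp only [circleEmbedding_add]
  rw [Measure.map_apply (measurable_const_add x) hA,
    measurableEmbedding_circleEmbedding.comap_apply,
    measurableEmbedding_circleEmbedding.comap_apply, himage,
    (isometry_mul_left_of_norm_eq_one (norm_circleEmbedding _)).hausdorffMeasure_image
      (Or.inl zero_le_one)]

lemma hausdorffMeasure_image_exp_mul_I_le (s : Set ℝ) :
    μH[1] ((fun t : ℝ => exp (t * I)) '' s) ≤ volume s := by
  simpa [hausdorffMeasure_real] using
    lipschitzWith_exp_mul_I.hausdorffMeasure_image_le zero_le_one s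

lemma two_mul_sin_le_hausdorffMeasure_arc {h : ℝ} (hh : 0 ≤ h) :
    ENNReal.ofReal (2 * Real.sin h) ≤ μH[1] ((fun t : ℝ => exp (t * I)) '' Icc (-h) h) := by
  have hsin : Icc (-Real.sin h) (Real.sin h)
      ⊆ im '' ((fun t : ℝ => exp (t * I)) '' Icc (-h) h) := by
    rw [image_image]
    simp only [exp_ofReal_mul_I_im]
    simpa using intermediate_value_Icc (neg_le_self hh) Real.continuous_sin.continuousOn
  calc ENNReal.ofReal (2 * Real.sin h) = μH[1] (Icc (-Real.sin h) (Real.sin h)) := by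
        rw [hausdorffMeasure_real, Real.volume_Icc]; ring_nf
    _ ≤ μH[1] (im '' ((fun t : ℝ => exp (t * I)) '' Icc (-h) h)) := measure_mono hsin
    _ ≤ μH[1] ((fun t : ℝ => exp (t * I)) '' Icc (-h) h) := by
        simpa using (RCLike.lipschitzWith_im (K := ℂ)).hausdorffMeasure_image_le zero_le_one _

lemma one_le_of_forall_sin_le_mul {c : ℝ} (h : ∀ x ∈ Ioc (0 : ℝ) 1, Real.sin x ≤ c * x) :
    1 ≤ c := by
  by_contra! hc
  set x := min 1 (1 - c)
  have hx : x ∈ Ioc (0 : ℝ) 1 := ⟨lt_min one_pos (by linarith), min_le_left _ _⟩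
  have hsq : x ^ 2 ≤ 1 - c := by nlinarith [min_le_right 1 (1 - c), hx.1, hx.2]
  have hlt : x * (1 - x ^ 2 / 6) < x * c := by
    nlinarith [(h x hx).trans_lt' (Real.sin_gt_sub_cube hx.1)]
  nlinarith [lt_of_mul_lt_mul_left hlt hx.1.le]

lemma hausdorffMeasure_range_circleEmbedding_le :
    μH[1] (range circleEmbedding) ≤ ENNReal.ofReal (2 * π) := by
  rw [← image_univ, ← AddCircle.coe_image_Icc_eq (2 * π) 0, image_image]
  simp only [circleEmbedding_coe]
  simpa using hausdorffMeasure_image_exp_mul_I_le (Icc 0 (0 + 2 * π))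

lemma two_mul_sin_le_comap_hausdorffMeasure_closedBall {x : ℝ} (hx₀ : 0 ≤ x) (hxπ : x ≤ π) :
    ENNReal.ofReal (2 * Real.sin x)
      ≤ (μH[1] : Measure ℂ).comap circleEmbedding (Metric.closedBall 0 x) := by
  rw [measurableEmbedding_circleEmbedding.comap_apply]
  refine (two_mul_sin_le_hausdorffMeasure_arc hx₀).trans (measure_mono ?_)
  rintro _ ⟨t, ht, rfl⟩
  refine ⟨t, ?_, circleEmbedding_coe t⟩
  rw [Metric.mem_closedBall, dist_zero_right,
    (AddCircle.norm_coe_eq_abs_iff _ two_pi_pos.ne').2 ?_]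
  · exact abs_le.2 ht
  · rw [abs_of_pos two_pi_pos]; linarith [abs_le.2 ht]

lemma comap_hausdorffMeasure_circleEmbedding :
    (μH[1] : Measure ℂ).comap circleEmbedding = volume := by
  have hμ : (μH[1] : Measure ℂ).comap circleEmbedding univ ≤ ENNReal.ofReal (2 * π) := by
    rw [measurableEmbedding_circleEmbedding.comap_apply, image_univ]
    exact hausdorffMeasure_range_circleEmbedding_le
  have : IsFiniteMeasure ((μH[1] : Measure ℂ).comap circleEmbedding) :=
    ⟨hμ.trans_lt ENNReal.ofReal_lt_top⟩
  obtain ⟨c, hc⟩ : ∃ c : ℝ≥0, (μH[1] : Measure ℂ).comap circleEmbedding = c • volume :=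
    ⟨_, Measure.isAddLeftInvariant_eq_smul _ volume⟩
  have hc_le : c ≤ 1 := by
    rw [hc, Measure.smul_apply, AddCircle.measure_univ, ENNReal.smul_def, smul_eq_mul,
      ← ENNReal.ofReal_coe_nnreal, ← ENNReal.ofReal_mul c.coe_nonneg,
      ENNReal.ofReal_le_ofReal_iff two_pi_pos.le] at hμ
    suffices (c : ℝ) ≤ 1 by exact_mod_cast this
    nlinarith [two_pi_pos]
  have hc_ge : 1 ≤ c := by
    suffices (1 : ℝ) ≤ c by exact_mod_cast this
    refine one_le_of_forall_sin_le_mul fun x hx => ?_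
    have := two_mul_sin_le_comap_hausdorffMeasure_closedBall hx.1.le
      (by linarith [hx.2, pi_gt_three])
    rw [hc, Measure.smul_apply, AddCircle.volume_closedBall,
      min_eq_right (by linarith [hx.2, pi_gt_three]), ENNReal.smul_def, smul_eq_mul,
      ← ENNReal.ofReal_coe_nnreal, ← ENNReal.ofReal_mul c.coe_nonneg,
      ENNReal.ofReal_le_ofReal_iff (mul_nonneg c.coe_nonneg (by linarith [hx.1]))] at this
    linarith
  rw [hc, le_antisymm hc_le hc_ge, one_smul]

lemma hausdorffMeasure_restrict_sphere :
    (μH[1] : Measure ℂ).restrict (Metric.sphere 0 1) = volume.map circleEmbedding := by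
  rw [← range_circleEmbedding, ← measurableEmbedding_circleEmbedding.map_comap,
    comap_hausdorffMeasure_circleEmbedding]

section Integrals

variable {E : Type*} [NormedAddCommGroup E] [NormedSpace ℝ E]

lemma setIntegral_sphere_hausdorffMeasure (f : ℂ → E) :
    ∫ z in Metric.sphere 0 1, f z ∂μH[1] = ∫ t in -π..π, f (exp (t * I)) := by
  rw [hausdorffMeasure_restrict_sphere, measurableEmbedding_circleEmbedding.integral_map,
    ← AddCircle.intervalIntegral_preimage (2 * π) (-π), show -π + 2 * π = π by ring]
  simp only [circleEmbedding_coe]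

theorem Isometry.setIntegral_image_hausdorffMeasure {X Y : Type*} [MetricSpace X]
    [CompleteSpace X] [MeasurableSpace X] [BorelSpace X] [MetricSpace Y] [MeasurableSpace Y]
    [BorelSpace Y] {L : X → Y} (hL : Isometry L) {d : ℝ} (hd : 0 ≤ d) (f : Y → E) (s : Set X) :
    ∫ y in L '' s, f y ∂μH[d] = ∫ x in s, f (L x) ∂μH[d] := by
  rw [← Measure.restrict_restrict_of_subset (image_subset_range L s),
    ← hL.map_hausdorffMeasure (Or.inl hd),
    hL.isClosedEmbedding.measurableEmbedding.setIntegral_map, hL.injective.preimage_image]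

section planeEmbedding

variable {V : Type*} [NormedAddCommGroup V] [InnerProductSpace ℝ V] {u v : V}

def planeEmbedding (u v : V) (z : ℂ) : V := z.re • u + z.im • v

lemma norm_planeEmbedding (hu : ‖u‖ = 1) (hv : ‖v‖ = 1) (huv : ⟪u, v⟫ = 0) (z : ℂ) :
    ‖planeEmbedding u v z‖ = ‖z‖ := by
  rw [← sq_eq_sq₀ (norm_nonneg _) (norm_nonneg _), planeEmbedding, norm_add_sq_real,
    real_inner_smul_left, real_inner_smul_right, huv, norm_smul, norm_smul, hu, hv,
    Complex.sq_norm, Complex.normSq_apply]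
  simp only [Real.norm_eq_abs, mul_one, sq_abs]
  ring

lemma isometry_planeEmbedding (hu : ‖u‖ = 1) (hv : ‖v‖ = 1) (huv : ⟪u, v⟫ = 0) :
    Isometry (planeEmbedding u v) := by
  refine Isometry.of_dist_eq fun z w => ?_
  rw [dist_eq_norm, dist_eq_norm, ← norm_planeEmbedding hu hv huv (z - w), planeEmbedding,
    planeEmbedding, planeEmbedding, sub_re, sub_im, sub_smul, sub_smul]
  congr 1
  abel

lemma setIntegral_image_sphere_planeEmbedding [MeasurableSpace V] [BorelSpace V]
    (hu : ‖u‖ = 1) (hv : ‖v‖ = 1) (huv : ⟪u, v⟫ = 0) (f : V → E) :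
    ∫ x in planeEmbedding u v '' Metric.sphere 0 1, f x ∂μH[1]
      = ∫ t in -π..π, f (Real.cos t • u + Real.sin t • v) := by
  rw [(isometry_planeEmbedding hu hv huv).setIntegral_image_hausdorffMeasure zero_le_one,
    setIntegral_sphere_hausdorffMeasure]
  simp only [planeEmbedding, exp_ofReal_mul_I_re, exp_ofReal_mul_I_im]

lemma Orthonormal.sum_inner_smul_eq {ι : Type*} [Fintype ι] [Nonempty ι] {b : ι → V}
    (hb : Orthonormal ℝ b) (hcard : Fintype.card ι = Module.finrank ℝ V) (x : V) :
    ∑ i, ⟪b i, x⟫ • b i = x := by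
  have := ((basisOfOrthonormalOfCardEqFinrank hb hcard).toOrthonormalBasis
    (by simpa using hb)).sum_repr' x
  rwa [Module.Basis.coe_toOrthonormalBasis, coe_basisOfOrthonormalOfCardEqFinrank] at this

end planeEmbedding

lemma circleSet_eq_image_sphere {θ u v : E3} (h : Orthonormal ℝ ![θ, u, v]) :
    circleSet θ = planeEmbedding u v '' Metric.sphere 0 1 := by
  have hu : ‖u‖ = 1 := by simpa using h.1 1
  have hv : ‖v‖ = 1 := by simpa using h.1 2
  have huv : ⟪u, v⟫ = 0 := by simpa using h.2 (show (1 : Fin 3) ≠ 2 by decide)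
  have hθu : ⟪θ, u⟫ = 0 := by simpa using h.2 (show (0 : Fin 3) ≠ 1 by decide)
  have hθv : ⟪θ, v⟫ = 0 := by simpa using h.2 (show (0 : Fin 3) ≠ 2 by decide)
  ext α
  simp only [circleSet, mem_ofPred_eq, mem_sphere_zero_iff_norm, mem_image]
  constructor
  · rintro ⟨hα, hθα⟩
    have hαL : planeEmbedding u v ⟨⟪u, α⟫, ⟪v, α⟫⟩ = α := by
      have hα_eq := h.sum_inner_smul_eq (by simp) α
      rw [Fin.sum_univ_three] at hα_eq
      simpa [hθα, planeEmbedding] using hα_eq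
    refine ⟨_, ?_, hαL⟩
    rw [← norm_planeEmbedding hu hv huv, hαL, hα]
  · rintro ⟨z, hz, rfl⟩
    refine ⟨by rw [norm_planeEmbedding hu hv huv, hz], ?_⟩
    rw [planeEmbedding, inner_add_right, real_inner_smul_right, real_inner_smul_right, hθu, hθv]
    ring

lemma funkT_eq_intervalIntegral {θ u v : E3} (h : Orthonormal ℝ ![θ, u, v]) (φ : E3 → ℝ) :
    funkT φ θ = ∫ t in -π..π, φ (Real.cos t • u + Real.sin t • v) := by
  rw [funkT, circleSet_eq_image_sphere h]
  exact setIntegral_image_sphere_planeEmbedding (by simpa using h.1 1) (by simpa using h.1 2)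
    (by simpa using h.2 (show (1 : Fin 3) ≠ 2 by decide)) φ

lemma cos_smul_add_sin_smul_mem_circleSet {θ u v : E3} (h : Orthonormal ℝ ![θ, u, v]) (t : ℝ) :
    Real.cos t • u + Real.sin t • v ∈ circleSet θ := by
  rw [circleSet_eq_image_sphere h]
  exact ⟨exp (t * I), by simp, by simp [planeEmbedding]⟩

lemma Function.Periodic.intervalIntegral_neg_eq_two_mul {g : ℝ → ℝ} {T : ℝ}
    (hper : Function.Periodic g T) (hg : ∀ a b, IntervalIntegrable g volume a b) :
    ∫ t in -T..T, g t = 2 * ∫ t in -(T / 2)..T / 2, g t := by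
  have h2 := hper.intervalIntegral_add_zsmul_eq 2 (-T) hg
  rw [show -T + (2 : ℤ) • T = T by rw [zsmul_eq_mul]; push_cast; ring,
    hper.intervalIntegral_add_eq (-T) (-(T / 2)), show -(T / 2) + T = T / 2 by ring] at h2
  rw [h2]
  simp

lemma integral_eq_setIntegral_mul_tan (f : ℝ → E) {c : ℝ} (hc : 0 < c) :
    ∫ x, f x = ∫ t in Ioo (-(π / 2)) (π / 2), (c / Real.cos t ^ 2) • f (c * Real.tan t) := by
  have himage : (fun t => c * Real.tan t) '' Ioo (-(π / 2)) (π / 2) = univ := by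
    refine eq_univ_of_forall fun x => ⟨Real.arctan (x / c),
      ⟨Real.neg_pi_div_two_lt_arctan _, Real.arctan_lt_pi_div_two _⟩, ?_⟩
    simp only [Real.tan_arctan]
    field_simp
  have hinj : InjOn (fun t => c * Real.tan t) (Ioo (-(π / 2)) (π / 2)) := fun x hx y hy hxy =>
    Real.injOn_tan hx hy (mul_left_cancel₀ hc.ne' hxy)
  have hderiv : ∀ t ∈ Ioo (-(π / 2)) (π / 2), HasDerivWithinAt (fun t => c * Real.tan t)
      (c / Real.cos t ^ 2) (Ioo (-(π / 2)) (π / 2)) t := fun t ht => by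
    have := ((Real.hasDerivAt_tan (Real.cos_pos_of_mem_Ioo ht).ne').const_mul c).hasDerivWithinAt
      (s := Ioo (-(π / 2)) (π / 2))
    rwa [mul_one_div] at this
  rw [← setIntegral_univ, ← himage,
    integral_image_eq_integral_abs_deriv_smul measurableSet_Ioo hderiv hinj]
  refine setIntegral_congr_fun measurableSet_Ioo fun t ht => ?_
  rw [abs_of_pos (by have := Real.cos_pos_of_mem_Ioo ht; positivity)]

end Integrals

@[simp] lemma vec3_apply_zero (a b c : ℝ) : vec3 a b c 0 = a := rfl
@[simp] lemma vec3_apply_one (a b c : ℝ) : vec3 a b c 1 = b := rfl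
@[simp] lemma vec3_apply_two (a b c : ℝ) : vec3 a b c 2 = c := rfl

lemma inner_E3 (x y : E3) : ⟪x, y⟫ = x 0 * y 0 + x 1 * y 1 + x 2 * y 2 := by
  simp [PiLp.inner_apply, Fin.sum_univ_three, mul_comm]

/- With `c = √(1 + s²)`, the line `{(x, 1) : ⟪x, ω⟫ = s}` of `ℝ³` is
`ν ↦ c • lineFoot ω s + ν • lineDirection ω`; these two vectors and
`θ = c⁻¹ • (ω, -s)` are orthonormal. -/
def lineFoot (ω : E2) (s : ℝ) : E3 := (√(1 + s ^ 2))⁻¹ • vec3 (s * ω 0) (s * ω 1) 1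

def lineDirection (ω : E2) : E3 := vec3 (-(ω 1)) (ω 0) 0

lemma orthonormal_lineFrame {ω : E2} (hω : ω 0 ^ 2 + ω 1 ^ 2 = 1) (s : ℝ) :
    Orthonormal ℝ ![(√(1 + s ^ 2))⁻¹ • vec3 (ω 0) (ω 1) (-s), lineFoot ω s, lineDirection ω] := by
  have hc : √(1 + s ^ 2) ^ 2 = 1 + s ^ 2 := Real.sq_sqrt (by positivity)
  rw [orthonormal_iff_ite]
  intro i j
  fin_cases i <;> fin_cases j <;> rw [inner_E3] <;> simp [lineFoot, lineDirection] <;> field_simp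
  all_goals first
    | ring1
    | linear_combination hω
    | linear_combination hω - hc
    | linear_combination s * hω
    | linear_combination s ^ 2 * hω - hc

lemma one_add_sq_add_sq_tan_param {ω : E2} (hω : ω 0 ^ 2 + ω 1 ^ 2 = 1) (s t : ℝ)
    (ht : t ∈ Ioo (-(π / 2)) (π / 2)) {x : E2}
    (hx : x = s • ω + (√(1 + s ^ 2) * Real.tan t) • perp ω) :
    1 + x 0 ^ 2 + x 1 ^ 2 = (√(1 + s ^ 2) / Real.cos t) ^ 2 := by
  have hcos := (Real.cos_pos_of_mem_Ioo ht).ne'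
  have hc : √(1 + s ^ 2) ^ 2 = 1 + s ^ 2 := Real.sq_sqrt (by positivity)
  simp [hx, perp, vec2, Real.tan_eq_sin_div_cos]
  field_simp
  linear_combination (s ^ 2 * Real.cos t ^ 2 + √(1 + s ^ 2) ^ 2 * Real.sin t ^ 2) * hω
    - Real.cos t ^ 2 * hc + √(1 + s ^ 2) ^ 2 * Real.sin_sq_add_cos_sq t

lemma inv_sqrt_smul_vec3_tan_param {ω : E2} (hω : ω 0 ^ 2 + ω 1 ^ 2 = 1) (s t : ℝ)
    (ht : t ∈ Ioo (-(π / 2)) (π / 2)) {x : E2}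
    (hx : x = s • ω + (√(1 + s ^ 2) * Real.tan t) • perp ω) :
    (√(1 + x 0 ^ 2 + x 1 ^ 2))⁻¹ • vec3 (x 0) (x 1) 1
      = Real.cos t • lineFoot ω s + Real.sin t • lineDirection ω := by
  have hcos := Real.cos_pos_of_mem_Ioo ht
  have hc : 0 < √(1 + s ^ 2) := Real.sqrt_pos.2 (by positivity)
  rw [one_add_sq_add_sq_tan_param hω s t ht hx, Real.sqrt_sq (by positivity)]
  ext i
  fin_cases i <;> simp [hx, perp, vec2, lineFoot, lineDirection, Real.tan_eq_sin_div_cos] <;>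
    field_simp

/-- `RΦ(ω,s) = (1+s²)^{-1/2} Fφ((ω₁,ω₂,-s)/√(1+s²))`. -/
theorem stmt3 (φ : E3 → ℝ) (hc : ContinuousOn φ (Metric.sphere 0 1))
    (he : ∀ θ ∈ Metric.sphere (0:E3) 1, φ θ = φ (-θ))
    (Φ : E2 → ℝ)
    (hΦ : ∀ x : E2, Φ x =
      2 * φ ((Real.sqrt (1 + (x 0)^2 + (x 1)^2))⁻¹ • vec3 (x 0) (x 1) 1)
        / (1 + (x 0)^2 + (x 1)^2)) :
    ∀ ω ∈ Metric.sphere (0:E2) 1, ∀ s : ℝ,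
      radon2 Φ ω s = (Real.sqrt (1 + s^2))⁻¹ *
        funkT φ ((Real.sqrt (1 + s^2))⁻¹ • vec3 (ω 0) (ω 1) (-s)) := by
  intro ω hω s
  have hω2 : ω 0 ^ 2 + ω 1 ^ 2 = 1 := by
    simpa [EuclideanSpace.norm_eq, Fin.sum_univ_two, Real.sqrt_eq_one] using hω
  have hframe := orthonormal_lineFrame hω2 s
  set g := fun t => φ (Real.cos t • lineFoot ω s + Real.sin t • lineDirection ω)
  have hmem t := (cos_smul_add_sin_smul_mem_circleSet hframe t).1
  have hg : Continuous g := hc.comp_continuous (by fun_prop) hmem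
  have hper : Function.Periodic g π := fun t => by
    simp only [g, Real.cos_add_pi, Real.sin_add_pi, neg_smul, ← neg_add, ← he _ (hmem t)]
  have hsqrt : 0 < √(1 + s ^ 2) := Real.sqrt_pos.2 (by positivity)
  rw [funkT_eq_intervalIntegral hframe,
    hper.intervalIntegral_neg_eq_two_mul fun _ _ => hg.intervalIntegrable _ _, radon2,
    integral_eq_setIntegral_mul_tan _ hsqrt, intervalIntegral.integral_of_le (by linarith [pi_pos]),
    integral_Ioc_eq_integral_Ioo, ← mul_assoc, ← integral_const_mul]
  refine setIntegral_congr_fun measurableSet_Ioo fun t ht => ?_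
  have hcos := Real.cos_pos_of_mem_Ioo ht
  rw [hΦ, smul_eq_mul, inv_sqrt_smul_vec3_tan_param hω2 s t ht rfl,
    one_add_sq_add_sq_tan_param hω2 s t ht rfl]
  simp only [g]
  field_simp
end
end

section
/- Let ε > 0, let ψ : [0, ε] → ℝ be continuous, and let n be a positive integer. Then for every integer k with 1 ≤ k ≤ n and every t ∈ (0, ε), the function t ↦ ∫₀ᵗ ψ(τ) · (t−τ)^{n+1}/t dτ is k times differentiable at t and its k-th derivative there equals ∫₀ᵗ ψ(τ) · (∂_t)^k( (t−τ)^{n+1}/t ) dτ, where (∂_t)^k( (t−τ)^{n+1}/t ) is the k-th derivative in t of t ↦ (t−τ)^{n+1}/t for fixed τ. -/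
open MeasureTheory Filter Real
open scoped Topology RealInnerProductSpace

noncomputable section

/-!
Expanding `(u - τ)^(n+1) / u` binomially writes the kernel as a finite sum `∑ᵢ u^(n-i) bᵢ(τ)`,
so the parametric integral is `∑ᵢ u^(n-i) ∫₀ᵘ ψ bᵢ`, and the fundamental theorem of calculus gives
the Leibniz rule `d/du ∫₀ᵘ ψ(τ) K(u,τ) dτ = ψ(u) K(u,u) + ∫₀ᵘ ψ(τ) ∂ᵤK(u,τ) dτ`. Applied to
`K = ∂ᵤʲ((u - τ)^(n+1) / u)` with `j ≤ n`, the boundary term vanishes because `(u - τ)^(n+1)` has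
a zero of order `n + 1` at `τ = u`, so each derivative passes under the integral sign.
-/

open Finset Set intervalIntegral

theorem contDiffAt_zpow {𝕜 : Type*} [NontriviallyNormedField 𝕜] {k : WithTop ℕ∞} (m : ℤ)
    {x : 𝕜} (hx : x ≠ 0) : ContDiffAt 𝕜 k (· ^ m) x := by
  cases m with
  | ofNat p => simpa using contDiffAt_id.pow p
  | negSucc p =>
    simp_rw [zpow_negSucc]
    exact (contDiffAt_id.pow (p + 1)).inv (pow_ne_zero _ hx)

theorem hasDerivAt_iteratedDeriv_zpow {𝕜 : Type*} [NontriviallyNormedField 𝕜] (m : ℤ) (j : ℕ)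
    {u : 𝕜} (hu : u ≠ 0) :
    HasDerivAt (iteratedDeriv j (· ^ m)) (iteratedDeriv (j + 1) (· ^ m) u) u := by
  rw [iteratedDeriv_succ]
  refine DifferentiableAt.hasDerivAt ?_
  rw [iteratedDeriv_eq_iterate, iter_deriv_zpow']
  exact (differentiableAt_zpow.mpr (Or.inl hu)).const_mul _

theorem hasDerivAt_integral_mul_sum_mul {ι : Type*} {a b t : ℝ} {ψ : ℝ → ℝ} {s : Finset ι}
    {A B : ι → ℝ → ℝ} {A' : ι → ℝ} (hψ : ContinuousOn ψ (Icc a b))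
    (hB : ∀ i ∈ s, Continuous (B i)) (hA : ∀ i ∈ s, HasDerivAt (A i) (A' i) t)
    (ht : t ∈ Ioo a b) :
    HasDerivAt (fun u => ∫ τ in a..u, ψ τ * ∑ i ∈ s, A i u * B i τ)
      (ψ t * ∑ i ∈ s, A i t * B i t + ∫ τ in a..t, ψ τ * ∑ i ∈ s, A' i * B i τ) t := by
  have hcont : ∀ i ∈ s, ContinuousOn (fun τ => ψ τ * B i τ) (Icc a b) :=
    fun i hi => hψ.mul (hB i hi).continuousOn
  have hint : ∀ u ∈ Icc a b, ∀ i ∈ s, IntervalIntegrable (fun τ => ψ τ * B i τ) volume a u :=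
    fun u hu i hi => ((hcont i hi).mono (by
      rw [uIcc_of_le hu.1]; exact Icc_subset_Icc le_rfl hu.2)).intervalIntegrable
  have hsplit : ∀ u ∈ Icc a b, ∀ C : ι → ℝ, ∫ τ in a..u, ψ τ * ∑ i ∈ s, C i * B i τ
      = ∑ i ∈ s, C i * ∫ τ in a..u, ψ τ * B i τ := by
    intro u hu C
    simp_rw [mul_sum, mul_left_comm (ψ _)]
    rw [integral_finsetSum fun i hi => (hint u hu i hi).const_mul (C i)]
    simp_rw [intervalIntegral.integral_const_mul]
  have hmoment : ∀ i ∈ s, HasDerivAt (fun u => ∫ τ in a..u, ψ τ * B i τ) (ψ t * B i t) t :=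
    fun i hi => integral_hasDerivAt_right (hint t (Ioo_subset_Icc_self ht) i hi)
      (((hcont i hi).mono Ioo_subset_Icc_self).stronglyMeasurableAtFilter isOpen_Ioo t ht)
      ((hcont i hi).continuousAt (Icc_mem_nhds ht.1 ht.2))
  refine ((HasDerivAt.fun_sum fun i hi => (hA i hi).mul (hmoment i hi)).congr_of_eventuallyEq
    ?_).congr_deriv ?_
  · filter_upwards [Icc_mem_nhds ht.1 ht.2] with u hu using hsplit u hu (A · u)
  · rw [hsplit t (Ioo_subset_Icc_self ht), sum_add_distrib, mul_sum, add_comm]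
    congr 1
    exact sum_congr rfl fun i _ => by ring

section Kernel

variable {n : ℕ} {u : ℝ}

theorem sub_pow_succ_div_eq_sum (hu : u ≠ 0) (τ : ℝ) :
    (u - τ) ^ (n + 1) / u
      = ∑ i ∈ range (n + 2), u ^ ((n : ℤ) - i) * ((n + 1).choose i * (-τ) ^ i) := by
  rw [sub_eq_neg_add, add_pow, sum_div]
  refine sum_congr rfl fun i hi => ?_
  have hi : i ≤ n + 1 := Nat.lt_succ_iff.mp (mem_range.mp hi)
  rw [show (n : ℤ) - i = ((n + 1 - i : ℕ) : ℤ) - 1 by omega, zpow_sub_one₀ hu, zpow_natCast]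
  ring

theorem iteratedDeriv_sub_pow_succ_div (j : ℕ) (hu : u ≠ 0) (τ : ℝ) :
    iteratedDeriv j (fun v => (v - τ) ^ (n + 1) / v) u
      = ∑ i ∈ range (n + 2),
          iteratedDeriv j (· ^ ((n : ℤ) - i)) u * ((n + 1).choose i * (-τ) ^ i) := by
  have hev : (fun v => (v - τ) ^ (n + 1) / v) =ᶠ[𝓝 u]
      fun v => ∑ i ∈ range (n + 2), v ^ ((n : ℤ) - i) * ((n + 1).choose i * (-τ) ^ i) := by
    filter_upwards [isOpen_ne.mem_nhds hu] with v hv using sub_pow_succ_div_eq_sum hv τ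
  rw [hev.iteratedDeriv_eq, iteratedDeriv_fun_sum fun i _ =>
    (contDiffAt_zpow _ hu).mul contDiffAt_const]
  simp_rw [iteratedDeriv_mul_const_field]

theorem iteratedDeriv_sub_pow_succ_div_self {j : ℕ} (hj : j ≤ n) (hu : u ≠ 0) :
    iteratedDeriv j (fun v => (v - u) ^ (n + 1) / v) u = 0 := by
  simp_rw [div_eq_mul_inv]
  rw [iteratedDeriv_fun_mul (by fun_prop) ((contDiffAt_inv ℝ hu).of_le le_top)]
  refine sum_eq_zero fun m hm => ?_
  have hm : m < n + 1 := by have := mem_range.mp hm; omega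
  rw [iteratedDeriv_comp_sub_const m (· ^ (n + 1)) u]
  simp [zero_pow (Nat.sub_ne_zero_of_lt hm)]

variable {ε : ℝ} {ψ : ℝ → ℝ}

theorem hasDerivAt_integral_iteratedDeriv_sub_pow_succ_div (hψ : ContinuousOn ψ (Icc 0 ε))
    {j : ℕ} (hj : j ≤ n) {t : ℝ} (ht : t ∈ Ioo 0 ε) :
    HasDerivAt (fun u => ∫ τ in (0:ℝ)..u, ψ τ * iteratedDeriv j (fun v => (v - τ) ^ (n + 1) / v) u)
      (∫ τ in (0:ℝ)..t, ψ τ * iteratedDeriv (j + 1) (fun v => (v - τ) ^ (n + 1) / v) t) t := by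
  have ht0 : t ≠ 0 := ht.1.ne'
  have hleibniz := hasDerivAt_integral_mul_sum_mul hψ (s := range (n + 2))
    (A := fun (i : ℕ) => iteratedDeriv j (· ^ ((n : ℤ) - i)))
    (B := fun i τ => (n + 1).choose i * (-τ) ^ i)
    (fun i _ => by fun_prop) (fun i _ => hasDerivAt_iteratedDeriv_zpow _ j ht0) ht
  refine (hleibniz.congr_of_eventuallyEq ?_).congr_deriv ?_
  · filter_upwards [isOpen_ne.mem_nhds ht0] with u hu
    simp_rw [iteratedDeriv_sub_pow_succ_div j hu]
  · rw [← iteratedDeriv_sub_pow_succ_div j ht0 t, iteratedDeriv_sub_pow_succ_div_self hj ht0,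
      mul_zero, zero_add]
    simp_rw [iteratedDeriv_sub_pow_succ_div (j + 1) ht0]

theorem iteratedDeriv_integral_sub_pow_succ_div (hψ : ContinuousOn ψ (Icc 0 ε)) {k : ℕ}
    (hk : k ≤ n + 1) :
    EqOn (iteratedDeriv k (fun u => ∫ τ in (0:ℝ)..u, ψ τ * ((u - τ) ^ (n + 1) / u)))
      (fun u => ∫ τ in (0:ℝ)..u, ψ τ * iteratedDeriv k (fun v => (v - τ) ^ (n + 1) / v) u)
      (Ioo 0 ε) := by
  induction k with
  | zero => exact fun u _ => by simp only [iteratedDeriv_zero]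
  | succ k ih =>
    intro t ht
    rw [iteratedDeriv_succ, ((ih (by omega)).eventuallyEq_of_mem (isOpen_Ioo.mem_nhds ht)).deriv_eq,
      (hasDerivAt_integral_iteratedDeriv_sub_pow_succ_div hψ (by omega) ht).deriv]

end Kernel

theorem stmt10_general (ε : ℝ) (ψ : ℝ → ℝ)
    (hψ : ContinuousOn ψ (Set.Icc 0 ε)) (n : ℕ) :
    ∀ k : ℕ, 1 ≤ k → k ≤ n → ∀ t ∈ Set.Ioo (0:ℝ) ε,
      (∀ j < k, DifferentiableAt ℝ
        (iteratedDeriv j (fun u : ℝ => ∫ τ in (0:ℝ)..u, ψ τ * ((u - τ)^(n+1) / u))) t) ∧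
      iteratedDeriv k (fun u : ℝ => ∫ τ in (0:ℝ)..u, ψ τ * ((u - τ)^(n+1) / u)) t
        = ∫ τ in (0:ℝ)..t, ψ τ * iteratedDeriv k (fun u => (u - τ)^(n+1) / u) t := by
  intro k _ hkn t ht
  refine ⟨fun j hj => ?_, iteratedDeriv_integral_sub_pow_succ_div hψ (by omega) ht⟩
  have hj' : j ≤ n + 1 := by omega
  have hev := (iteratedDeriv_integral_sub_pow_succ_div hψ hj').eventuallyEq_of_mem
    (isOpen_Ioo.mem_nhds ht)
  exact (hasDerivAt_integral_iteratedDeriv_sub_pow_succ_div hψ (by omega) ht).differentiableAt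
    |>.congr_of_eventuallyEq hev

/-- differentiation under the integral sign for `t ↦ ∫₀ᵗ ψ(τ)(t-τ)^{n+1}/t dτ`. -/
theorem stmt10 (ε : ℝ) (hε : 0 < ε) (ψ : ℝ → ℝ)
    (hψ : ContinuousOn ψ (Set.Icc 0 ε)) (n : ℕ) (hn : 0 < n) :
    ∀ k : ℕ, 1 ≤ k → k ≤ n → ∀ t ∈ Set.Ioo (0:ℝ) ε,
      (∀ j < k, DifferentiableAt ℝ
        (iteratedDeriv j (fun u : ℝ => ∫ τ in (0:ℝ)..u, ψ τ * ((u - τ)^(n+1) / u))) t) ∧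
      iteratedDeriv k (fun u : ℝ => ∫ τ in (0:ℝ)..u, ψ τ * ((u - τ)^(n+1) / u)) t
        = ∫ τ in (0:ℝ)..t, ψ τ * iteratedDeriv k (fun u => (u - τ)^(n+1) / u) t :=
  stmt10_general ε ψ hψ n
end
end

section
/- Let ε > 0 and let φ ∈ C^∞([0, ε]) satisfy φ(0) = 0. Define h : [0, ε] → ℝ by h(t) = (1/t)·∫₀ᵗ φ(τ) dτ for t ∈ (0, ε] and h(0) = 0. Then for every nonnegative integer n, the n-th derivative of h at 0 satisfies h^{(n)}(0) = φ^{(n)}(0)/(n+1), and moreover h^{(n)}(t) → φ^{(n)}(0)/(n+1) as t → 0⁺. -/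
/-!
Substituting `τ = t s` gives `h t = ∫₀¹ φ (t s) ds` on all of `[0, ε]` (at `t = 0` because
`φ 0 = 0`). Differentiating under the integral sign, which on the closed interval is done by
Fubini and the fundamental theorem of calculus, gives `h⁽ⁿ⁾ t = ∫₀¹ sⁿ φ⁽ⁿ⁾ (t s) ds`. This is
continuous on `[0, ε]` and equals `φ⁽ⁿ⁾ 0 / (n + 1)` at `t = 0`.
-/

open MeasureTheory Filter Real
open scoped Topology RealInnerProductSpace

noncomputable section

open Set
open scoped ContDiff

lemma ContinuousOn.exists_continuous_eqOn_Icc {α β : Type*} [LinearOrder α] [TopologicalSpace α]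
    [OrderTopology α] [TopologicalSpace β] {a b : α} (hab : a ≤ b) {f : α → β}
    (hf : ContinuousOn f (Icc a b)) : ∃ g : α → β, Continuous g ∧ EqOn g f (Icc a b) :=
  ⟨IccExtend hab ((Icc a b).domRestrict f),
    (continuousOn_iff_continuous_domRestrict.1 hf).Icc_extend',
    fun _ hx => IccExtend_of_mem hab _ hx⟩

lemma mul_mem_Icc_zero_of_mem_Icc_zero_one {a t s : ℝ} (ht : t ∈ Icc 0 a)
    (hs : s ∈ Icc (0 : ℝ) 1) : t * s ∈ Icc 0 a :=
  ⟨mul_nonneg ht.1 hs.1, (mul_le_of_le_one_right ht.1 hs.2).trans ht.2⟩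

lemma integral_eq_sub_of_hasDerivWithinAt_Icc {E : Type*} [NormedAddCommGroup E]
    [NormedSpace ℝ E] [CompleteSpace E] {a b : ℝ} {f f' : ℝ → E} (hab : a ≤ b)
    (hf : ∀ x ∈ Icc a b, HasDerivWithinAt f (f' x) (Icc a b) x)
    (hf' : IntervalIntegrable f' volume a b) : ∫ x in a..b, f' x = f b - f a :=
  intervalIntegral.integral_eq_sub_of_hasDerivAt_of_le hab
    (fun x hx => (hf x hx).continuousWithinAt)
    (fun x hx => (hf x (Ioo_subset_Icc_self hx)).hasDerivAt (Icc_mem_nhds hx.1 hx.2)) hf'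

lemma ContDiffOn.hasDerivWithinAt_iteratedDerivWithin {𝕜 F : Type*} [NontriviallyNormedField 𝕜]
    [NormedAddCommGroup F] [NormedSpace 𝕜 F] {n : WithTop ℕ∞} {m : ℕ} {f : 𝕜 → F} {s : Set 𝕜}
    {x : 𝕜} (hf : ContDiffOn 𝕜 n f s) (hmn : m < n) (hs : UniqueDiffOn 𝕜 s) (hx : x ∈ s) :
    HasDerivWithinAt (iteratedDerivWithin m f s) (iteratedDerivWithin (m + 1) f s x) s x := by
  rw [iteratedDerivWithin_succ]
  exact (hf.differentiableOn_iteratedDerivWithin hmn hs x hx).hasDerivWithinAt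

def dilatedMoment (n : ℕ) (f : ℝ → ℝ) (t : ℝ) : ℝ := ∫ s in (0 : ℝ)..1, s ^ n * f (t * s)

section dilatedMoment

variable {a : ℝ} {f f' : ℝ → ℝ} {n : ℕ}

lemma dilatedMoment_zero_right (n : ℕ) (f : ℝ → ℝ) : dilatedMoment n f 0 = f 0 / (n + 1) := by
  simp [dilatedMoment, intervalIntegral.integral_mul_const, integral_pow, div_eq_inv_mul]

lemma dilatedMoment_zero_left_of_ne_zero (f : ℝ → ℝ) {t : ℝ} (ht : t ≠ 0) :
    dilatedMoment 0 f t = (∫ τ in (0 : ℝ)..t, f τ) / t := by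
  simp [dilatedMoment, intervalIntegral.integral_comp_mul_left _ ht, div_eq_inv_mul]

lemma dilatedMoment_congr {g : ℝ → ℝ} (hfg : EqOn f g (Icc 0 a)) :
    EqOn (dilatedMoment n f) (dilatedMoment n g) (Icc 0 a) := fun t ht =>
  intervalIntegral.integral_congr fun s hs => by
    rw [uIcc_of_le zero_le_one] at hs
    rw [hfg (mul_mem_Icc_zero_of_mem_Icc_zero_one ht hs)]

lemma Continuous.dilatedMoment (hf : Continuous f) : Continuous (dilatedMoment n f) := by
  unfold _root_.dilatedMoment; fun_prop

lemma ContinuousOn.dilatedMoment (hf : ContinuousOn f (Icc 0 a)) :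
    ContinuousOn (dilatedMoment n f) (Icc 0 a) := by
  intro t ht
  obtain ⟨g, hg, hgf⟩ := hf.exists_continuous_eqOn_Icc (ht.1.trans ht.2)
  exact (hg.dilatedMoment.continuousOn.congr (dilatedMoment_congr hgf).symm) t ht

lemma ContinuousOn.intervalIntegrable_pow_mul_comp_mul (hf : ContinuousOn f (Icc 0 a)) {t : ℝ}
    (ht : t ∈ Icc 0 a) : IntervalIntegrable (fun s => s ^ n * f (t * s)) volume 0 1 := by
  refine ContinuousOn.intervalIntegrable ?_
  rw [uIcc_of_le zero_le_one]
  exact (continuousOn_pow n).mul (hf.comp (by fun_prop)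
    fun s hs => mul_mem_Icc_zero_of_mem_Icc_zero_one ht hs)

lemma integral_dilatedMoment_succ (hf : ∀ x ∈ Icc 0 a, HasDerivWithinAt f (f' x) (Icc 0 a) x)
    (hf' : Continuous f') {t : ℝ} (ht : t ∈ Icc 0 a) :
    ∫ u in (0 : ℝ)..t, dilatedMoment (n + 1) f' u = dilatedMoment n f t - dilatedMoment n f 0 := by
  have hfc : ContinuousOn f (Icc 0 a) := fun x hx => (hf x hx).continuousWithinAt
  have hinner : ∀ s ∈ uIcc (0 : ℝ) 1, ∫ u in (0 : ℝ)..t, s ^ (n + 1) * f' (u * s)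
      = s ^ n * f (t * s) - s ^ n * f (0 * s) := by
    intro s hs
    rw [uIcc_of_le zero_le_one] at hs
    rcases hs.1.eq_or_lt with rfl | hs0
    · simp
    have hts := mul_mem_Icc_zero_of_mem_Icc_zero_one ht hs
    rw [intervalIntegral.integral_const_mul, intervalIntegral.integral_comp_mul_right _ hs0.ne',
      zero_mul, smul_eq_mul, integral_eq_sub_of_hasDerivWithinAt_Icc hts.1
        (fun x hx => (hf x (Icc_subset_Icc_right hts.2 hx)).mono (Icc_subset_Icc_right hts.2))
        (hf'.intervalIntegrable _ _)]
    field_simp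
    ring
  have hswap : IntegrableOn (fun p : ℝ × ℝ => p.2 ^ (n + 1) * f' (p.1 * p.2))
      (uIoc 0 t ×ˢ uIoc 0 1) :=
    (ContinuousOn.integrableOn_compact (isCompact_uIcc.prod isCompact_uIcc) (by fun_prop)).mono_set
      (prod_mono uIoc_subset_uIcc uIoc_subset_uIcc)
  calc ∫ u in (0 : ℝ)..t, dilatedMoment (n + 1) f' u
      = ∫ s in (0 : ℝ)..1, ∫ u in (0 : ℝ)..t, s ^ (n + 1) * f' (u * s) :=
        intervalIntegral_intervalIntegral_swap hswap
    _ = ∫ s in (0 : ℝ)..1, (s ^ n * f (t * s) - s ^ n * f (0 * s)) :=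
        intervalIntegral.integral_congr hinner
    _ = dilatedMoment n f t - dilatedMoment n f 0 :=
        intervalIntegral.integral_sub (hfc.intervalIntegrable_pow_mul_comp_mul ht)
          (hfc.intervalIntegrable_pow_mul_comp_mul ⟨le_rfl, ht.1.trans ht.2⟩)

/-- Extending `f'` continuously to `ℝ` lets the fundamental theorem of calculus for continuous
integrands produce the derivative also at the endpoints of `[0, a]`. -/
lemma hasDerivWithinAt_dilatedMoment (hf : ∀ x ∈ Icc 0 a, HasDerivWithinAt f (f' x) (Icc 0 a) x)
    (hf' : ContinuousOn f' (Icc 0 a)) {t : ℝ} (ht : t ∈ Icc 0 a) :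
    HasDerivWithinAt (dilatedMoment n f) (dilatedMoment (n + 1) f' t) (Icc 0 a) t := by
  obtain ⟨g, hg, hgf'⟩ := hf'.exists_continuous_eqOn_Icc (ht.1.trans ht.2)
  have hfg : ∀ x ∈ Icc 0 a, HasDerivWithinAt f (g x) (Icc 0 a) x := fun x hx =>
    hgf' hx ▸ hf x hx
  have hprimitive : HasDerivAt
      (fun x => dilatedMoment n f 0 + ∫ u in (0 : ℝ)..x, dilatedMoment (n + 1) g u)
      (dilatedMoment (n + 1) g t) t :=
    (hg.dilatedMoment.integral_hasStrictDerivAt 0 t).hasDerivAt.const_add _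
  rw [← dilatedMoment_congr hgf' ht]
  refine hprimitive.hasDerivWithinAt.congr (fun x hx => ?_) ?_
  · rw [integral_dilatedMoment_succ hfg hg hx]; ring
  · rw [integral_dilatedMoment_succ hfg hg ht]; ring

lemma eqOn_iteratedDerivWithin_dilatedMoment {φ h : ℝ → ℝ} (ha : 0 < a)
    (hφ : ContDiffOn ℝ ∞ φ (Icc 0 a)) (hh : EqOn h (dilatedMoment 0 φ) (Icc 0 a)) (n : ℕ) :
    EqOn (iteratedDerivWithin n h (Icc 0 a))
      (dilatedMoment n (iteratedDerivWithin n φ (Icc 0 a))) (Icc 0 a) := by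
  induction n with
  | zero => simpa only [iteratedDerivWithin_zero] using hh
  | succ n ih =>
    intro t ht
    have hderiv := hasDerivWithinAt_dilatedMoment (n := n)
      (fun x hx => hφ.hasDerivWithinAt_iteratedDerivWithin (m := n)
        (mod_cast WithTop.coe_lt_top n) (uniqueDiffOn_Icc ha) hx)
      (hφ.continuousOn_iteratedDerivWithin (m := n + 1) (mod_cast le_top) (uniqueDiffOn_Icc ha))
      ht
    rw [iteratedDerivWithin_succ, derivWithin_congr ih (ih ht),
      hderiv.derivWithin (uniqueDiffOn_Icc ha t ht)]

end dilatedMoment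

/-- `h^{(n)}(0) = φ^{(n)}(0)/(n+1)` and `h^{(n)}(t) → φ^{(n)}(0)/(n+1)` as `t → 0⁺`. -/
theorem stmt12 (ε : ℝ) (hε : 0 < ε) (φ h : ℝ → ℝ)
    (hφ : ContDiffOn ℝ (⊤:ℕ∞) φ (Set.Icc 0 ε)) (h0 : φ 0 = 0)
    (hh : ∀ t ∈ Set.Ioc (0:ℝ) ε, h t = (∫ τ in (0:ℝ)..t, φ τ) / t)
    (hh0 : h 0 = 0) :
    ∀ n : ℕ,
      iteratedDerivWithin n h (Set.Icc 0 ε) 0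
        = iteratedDerivWithin n φ (Set.Icc 0 ε) 0 / (n + 1) ∧
      Tendsto (fun t => iteratedDerivWithin n h (Set.Icc 0 ε) t) (𝓝[>] 0)
        (𝓝 (iteratedDerivWithin n φ (Set.Icc 0 ε) 0 / (n + 1))) := by
  intro n
  have hmean : EqOn h (dilatedMoment 0 φ) (Icc 0 ε) := by
    rintro t ⟨ht0, hte⟩
    rcases ht0.eq_or_lt with rfl | ht0
    · rw [hh0, dilatedMoment_zero_right, h0, zero_div]
    · rw [hh t ⟨ht0, hte⟩, dilatedMoment_zero_left_of_ne_zero φ ht0.ne']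
  have hderiv := eqOn_iteratedDerivWithin_dilatedMoment hε hφ hmean n
  have hzero : (0 : ℝ) ∈ Icc 0 ε := left_mem_Icc.2 hε.le
  rw [hderiv hzero, dilatedMoment_zero_right]
  refine ⟨rfl, ?_⟩
  have hcont := (hφ.continuousOn_iteratedDerivWithin (m := n) (mod_cast le_top)
    (uniqueDiffOn_Icc hε)).dilatedMoment (n := n) 0 hzero
  have hlim := (hcont.mono_of_mem_nhdsWithin (Icc_mem_nhdsGT hε)).tendsto
  rw [dilatedMoment_zero_right] at hlim
  refine hlim.congr' ?_
  filter_upwards [Ioc_mem_nhdsGT hε] with t ht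
  exact (hderiv (Ioc_subset_Icc_self ht)).symm
end
end

section
/- Let r_det > 0 and let f ∈ C^∞(ℝ³) be compactly supported. Define p(x, t) = ∂_t( (1/(4πt)) · ∫_{∂B(x,t)} f(y) dS(y) ) for x ∈ ℝ³ and t > 0, where the integral is over the sphere of center x and radius t with respect to two-dimensional Hausdorff (surface) measure (this is Kirchhoff's formula for the solution of the wave equation with initial data p(·,0) = f, ∂_t p(·,0) = 0). Then for every θ ∈ S² and t > 0, (1/(2π)) · ∫_{α ∈ S², θ·α = 0} p(r_det·α, t) dS(α) = (1/(8π²)) · ∂_t( t · R_P f(θ, t) ), where the left-hand integral is over the great circle orthogonal to θ with respect to one-dimensional Hausdorff (arc-length) measure. -/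
open MeasureTheory Filter Real
open scoped Topology RealInnerProductSpace

noncomputable section

/-!
On the sphere of radius `t` around `x` the Hausdorff measure `μH[2]` is `t²` times the pushforward
of its restriction to the unit sphere, so Kirchhoff's formula reads
`p x t = (4π)⁻¹ ∂ₜ (t · S x t)` with `S x t = ∫_{S²} f (x + t β) dβ`. By definition
`R_P f (θ, t)` is the integral of `S (r α) t` over the great circle `α ⊥ θ`, so the identity
amounts to differentiating under the integral over that circle. This is legitimate because the
great circle and the unit sphere are `C¹` images of compact parameter domains, hence have finite
Hausdorff measure, and all integrands involved are jointly continuous.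
-/

open scoped ENNReal
open Module (finrank)

theorem ContDiff.hausdorffMeasure_image_lt_top {E F : Type*}
    [NormedAddCommGroup E] [NormedSpace ℝ E] [FiniteDimensional ℝ E]
    [MeasurableSpace E] [BorelSpace E] [NormedAddCommGroup F] [NormedSpace ℝ F]
    [MeasurableSpace F] [BorelSpace F] {g : E → F} (hg : ContDiff ℝ 1 g) {K : Set E}
    (hK : IsCompact K) : μH[finrank ℝ E] (g '' K) < ∞ := by
  obtain ⟨C, hC⟩ := hg.locallyLipschitz.locallyLipschitzOn.exists_lipschitzOnWith_of_compact hK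
  exact (hC.hausdorffMeasure_image_le (Nat.cast_nonneg _)).trans_lt
    (ENNReal.mul_lt_top (by finiteness) hK.measure_lt_top)

theorem image_add_smul_unitSphere {E : Type*} [NormedAddCommGroup E] [NormedSpace ℝ E] (x : E)
    {t : ℝ} (ht : t ≠ 0) :
    (fun β => x + t • β) '' Metric.sphere (0 : E) 1 = Metric.sphere x |t| := by
  have : (fun β => x + t • β) = (x + ·) ∘ (t • ·) := rfl
  rw [this, Set.image_comp, Set.image_smul, smul_sphere' ht, smul_zero, mul_one, Real.norm_eq_abs]
  simp

section HausdorffScaling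

variable {E F : Type*} [NormedAddCommGroup E] [NormedSpace ℝ E] [MeasurableSpace E]
  [BorelSpace E] [NormedAddCommGroup F] [NormedSpace ℝ F] {d : ℝ}

theorem map_add_smul_hausdorffMeasure (hd : 0 ≤ d) (x : E) {t : ℝ} (ht : t ≠ 0) :
    Measure.map (fun β => x + t • β) μH[d] = ‖t‖₊⁻¹ ^ d • μH[d] := by
  have hφ : (fun β => x + t • β) = IsometryEquiv.addLeft x ∘ AffineMap.homothety (0 : E) t := by
    ext β; simp [AffineMap.homothety_apply]
  rw [hφ, ← Measure.map_map (IsometryEquiv.addLeft x).continuous.measurable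
      (AffineMap.homothety_continuous _ _).measurable,
    map_homothety_hausdorffMeasure hd 0 ht, Measure.map_smul,
    IsometryEquiv.map_hausdorffMeasure]

theorem setIntegral_image_add_smul (hd : 0 ≤ d) (x : E) {t : ℝ} (ht : t ≠ 0) (s : Set E)
    (g : E → F) :
    ∫ y in (fun β => x + t • β) '' s, g y ∂μH[d] = |t| ^ d • ∫ β in s, g (x + t • β) ∂μH[d] := by
  have hpres : MeasurePreserving (fun β => x + t • β) (‖t‖₊ ^ d • μH[d]) μH[d] := by
    refine ⟨by fun_prop, ?_⟩
    rw [Measure.map_smul, map_add_smul_hausdorffMeasure hd x ht, smul_smul,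
      ← NNReal.mul_rpow, mul_inv_cancel₀ (nnnorm_ne_zero_iff.2 ht), NNReal.one_rpow, one_smul]
  have hemb : MeasurableEmbedding fun β => x + t • β :=
    ((Homeomorph.smulOfNeZero t ht).trans (Homeomorph.addLeft x)).measurableEmbedding
  rw [hpres.setIntegral_image_emb hemb, Measure.restrict_smul, integral_smul_nnreal_measure,
    NNReal.smul_def, NNReal.coe_rpow, coe_nnnorm, Real.norm_eq_abs]

theorem setIntegral_sphere_eq_rpow_smul (hd : 0 ≤ d) (x : E) {t : ℝ} (ht : 0 < t) (g : E → F) :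
    ∫ y in Metric.sphere x t, g y ∂μH[d] =
      t ^ d • ∫ β in Metric.sphere (0 : E) 1, g (x + t • β) ∂μH[d] := by
  have := setIntegral_image_add_smul hd x ht.ne' (Metric.sphere 0 1) g
  rwa [image_add_smul_unitSphere x ht.ne', abs_of_pos ht] at this

end HausdorffScaling

section ParametricIntegral

variable {X Y : Type*} [TopologicalSpace Y] [T2Space Y] [MeasurableSpace Y]
  [OpensMeasurableSpace Y] {μ : Measure Y} {K : Set Y}

theorem continuous_setIntegral_of_continuous_uncurry [TopologicalSpace X]
    [FirstCountableTopology X] [LocallyCompactSpace X] {F : X → Y → ℝ}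
    (hF : Continuous F.uncurry) (hK : IsCompact K) (hμK : μ K ≠ ∞) :
    Continuous fun x => ∫ y in K, F x y ∂μ := by
  have := isFiniteMeasure_restrict.2 hμK
  simpa [Measure.restrict_restrict hK.measurableSet] using
    continuous_parametric_integral_of_continuous (μ := μ.restrict K) hF hK

theorem hasDerivAt_setIntegral_of_continuous_uncurry {F F' : ℝ → Y → ℝ}
    (hF : ∀ t, Continuous (F t)) (hF' : Continuous F'.uncurry)
    (hderiv : ∀ t y, HasDerivAt (F · y) (F' t y) t) (hK : IsCompact K) (hμK : μ K ≠ ∞)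
    (t₀ : ℝ) :
    HasDerivAt (fun t => ∫ y in K, F t y ∂μ) (∫ y in K, F' t₀ y ∂μ) t₀ := by
  have := isFiniteMeasure_restrict.2 hμK
  obtain ⟨C, hC⟩ := ((isCompact_closedBall t₀ 1).prod hK).exists_bound_of_continuousOn
    hF'.continuousOn
  obtain ⟨C₀, hC₀⟩ := hK.exists_bound_of_continuousOn (hF t₀).continuousOn
  refine (hasDerivAt_integral_of_dominated_loc_of_deriv_le (bound := fun _ => C)
    (Metric.closedBall_mem_nhds t₀ one_pos)
    (.of_forall fun t => (hF t).aestronglyMeasurable)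
    (.of_bound (hF t₀).aestronglyMeasurable C₀ ?_)
    (hF'.uncurry_left t₀).aestronglyMeasurable ?_ (integrable_const C)
    (.of_forall fun y t _ => hderiv t y)).2
  · exact (ae_restrict_mem hK.measurableSet).mono fun y hy => hC₀ y hy
  · exact (ae_restrict_mem hK.measurableSet).mono fun y hy t ht => hC (t, y) ⟨ht, hy⟩

end ParametricIntegral

theorem exists_mem_Icc_eq_mul_cos_mul_sin (a b : ℝ) :
    ∃ s ∈ Set.Icc (-π) π, a = √(a ^ 2 + b ^ 2) * cos s ∧ b = √(a ^ 2 + b ^ 2) * sin s := by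
  have hz : ‖(⟨a, b⟩ : ℂ)‖ = √(a ^ 2 + b ^ 2) := by
    rw [Complex.norm_def, Complex.normSq_mk]; ring_nf
  refine ⟨Complex.arg ⟨a, b⟩, ⟨(Complex.neg_pi_lt_arg _).le, Complex.arg_le_pi _⟩, ?_, ?_⟩
  · rw [← hz, Complex.norm_mul_cos_arg]
  · rw [← hz, Complex.norm_mul_sin_arg]

def sphericalCoords (p : Fin 2 → ℝ) : E3 :=
  !₂[cos (p 0) * sin (p 1), sin (p 0) * sin (p 1), cos (p 1)]

theorem contDiff_sphericalCoords : ContDiff ℝ 1 sphericalCoords :=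
  contDiff_euclidean.2 fun i => by fin_cases i <;> simp [sphericalCoords] <;> fun_prop

theorem sphere_subset_image_sphericalCoords :
    Metric.sphere (0 : E3) 1 ⊆ sphericalCoords '' Set.univ.pi fun _ => Set.Icc (-π) π := by
  intro α hα
  have hnorm : α 0 ^ 2 + α 1 ^ 2 + α 2 ^ 2 = 1 := by
    have := EuclideanSpace.real_norm_sq_eq α
    rw [mem_sphere_zero_iff_norm.1 hα, Fin.sum_univ_three] at this
    linarith
  obtain ⟨φ, hφ, h0, h1⟩ := exists_mem_Icc_eq_mul_cos_mul_sin (α 0) (α 1)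
  obtain ⟨ψ, hψ, h2, hρ⟩ := exists_mem_Icc_eq_mul_cos_mul_sin (α 2) √(α 0 ^ 2 + α 1 ^ 2)
  have hone : α 2 ^ 2 + √(α 0 ^ 2 + α 1 ^ 2) ^ 2 = 1 := by
    rw [Real.sq_sqrt (by positivity)]; linarith
  rw [hone, Real.sqrt_one, one_mul] at h2 hρ
  rw [hρ] at h0 h1
  refine ⟨![φ, ψ], fun i _ => by fin_cases i <;> simpa, ?_⟩
  ext i; fin_cases i <;> simp [sphericalCoords, h0, h1, h2, mul_comm]

theorem hausdorffMeasure_unitSphere_lt_top : μH[2] (Metric.sphere (0 : E3) 1) < ∞ := by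
  have hfin : finrank ℝ (Fin 2 → ℝ) = 2 := Module.finrank_fin_fun ℝ
  refine (measure_mono sphere_subset_image_sphericalCoords).trans_lt ?_
  have := contDiff_sphericalCoords.hausdorffMeasure_image_lt_top
    (isCompact_univ_pi fun _ => isCompact_Icc (a := -π) (b := π))
  rwa [hfin, Nat.cast_ofNat] at this

theorem exists_circleSet_subset_image {θ : E3} (hθ : θ ≠ 0) :
    ∃ u v : E3, circleSet θ ⊆ (fun s => cos s • u + sin s • v) '' Set.Icc (-π) π := by
  have : Fact (finrank ℝ E3 = 2 + 1) := ⟨finrank_euclideanSpace_fin⟩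
  let b := OrthonormalBasis.fromOrthogonalSpanSingleton (𝕜 := ℝ) 2 hθ
  refine ⟨b 0, b 1, fun α ⟨hα, hαθ⟩ => ?_⟩
  let w : (ℝ ∙ θ)ᗮ := ⟨α, Submodule.mem_orthogonal_singleton_iff_inner_right.2 hαθ⟩
  have hw : ⟪b 0, w⟫ ^ 2 + ⟪b 1, w⟫ ^ 2 = 1 := by
    have := b.sum_inner_mul_inner w w
    rw [Fin.sum_univ_two, real_inner_self_eq_norm_sq, real_inner_comm (b 0) w,
      real_inner_comm (b 1) w, show ‖w‖ = 1 from mem_sphere_zero_iff_norm.1 hα] at this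
    linarith
  obtain ⟨s, hs, h0, h1⟩ := exists_mem_Icc_eq_mul_cos_mul_sin ⟪b 0, w⟫ ⟪b 1, w⟫
  rw [hw, Real.sqrt_one, one_mul] at h0 h1
  refine ⟨s, hs, ?_⟩
  have := congrArg Subtype.val (b.sum_repr' w)
  rw [Fin.sum_univ_two, h0, h1] at this
  simpa using this

theorem hausdorffMeasure_circleSet_lt_top {θ : E3} (hθ : θ ≠ 0) : μH[1] (circleSet θ) < ∞ := by
  obtain ⟨u, v, h⟩ := exists_circleSet_subset_image hθ
  refine (measure_mono h).trans_lt ?_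
  have := (show ContDiff ℝ 1 fun s : ℝ => cos s • u + sin s • v by fun_prop)
    |>.hausdorffMeasure_image_lt_top (isCompact_Icc (a := -π) (b := π))
  rwa [Module.finrank_self, Nat.cast_one] at this

theorem isCompact_circleSet (θ : E3) : IsCompact (circleSet θ) :=
  (isCompact_sphere 0 1).inter_right (isClosed_eq (by fun_prop) continuous_const)

def sphericalIntegral (f : E3 → ℝ) (x : E3) (t : ℝ) : ℝ :=
  ∫ β in Metric.sphere (0 : E3) 1, f (x + t • β) ∂μH[2]

def sphericalIntegralDeriv (f : E3 → ℝ) (x : E3) (t : ℝ) : ℝ :=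
  ∫ β in Metric.sphere (0 : E3) 1, fderiv ℝ f (x + t • β) β ∂μH[2]

section SphericalIntegral

variable {f : E3 → ℝ}

theorem continuous_sphericalIntegral (hf : Continuous f) :
    Continuous fun q : E3 × ℝ => sphericalIntegral f q.1 q.2 :=
  continuous_setIntegral_of_continuous_uncurry (F := fun (q : E3 × ℝ) β => f (q.1 + q.2 • β))
    (by fun_prop) (isCompact_sphere 0 1) hausdorffMeasure_unitSphere_lt_top.ne

theorem continuous_sphericalIntegralDeriv (hf : ContDiff ℝ 1 f) :
    Continuous fun q : E3 × ℝ => sphericalIntegralDeriv f q.1 q.2 := by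
  have hf' := hf.continuous_fderiv one_ne_zero
  exact continuous_setIntegral_of_continuous_uncurry
    (F := fun (q : E3 × ℝ) β => fderiv ℝ f (q.1 + q.2 • β) β)
    ((hf'.comp (by fun_prop)).clm_apply continuous_snd) (isCompact_sphere 0 1)
    hausdorffMeasure_unitSphere_lt_top.ne

theorem hasDerivAt_sphericalIntegral (hf : ContDiff ℝ 1 f) (x : E3) (t : ℝ) :
    HasDerivAt (sphericalIntegral f x) (sphericalIntegralDeriv f x t) t := by
  have hf' := hf.continuous_fderiv one_ne_zero
  refine hasDerivAt_setIntegral_of_continuous_uncurry (F := fun s β => f (x + s • β))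
    (F' := fun s β => fderiv ℝ f (x + s • β) β) (fun s => by fun_prop)
    ((hf'.comp (by fun_prop)).clm_apply continuous_snd)
    (fun s β => ?_) (isCompact_sphere 0 1) hausdorffMeasure_unitSphere_lt_top.ne t
  have hline : HasDerivAt (fun s : ℝ => x + s • β) β s := by
    simpa using ((hasDerivAt_id s).smul_const β).const_add x
  exact (hf.differentiable one_ne_zero _).hasFDerivAt.comp_hasDerivAt s hline

theorem hasDerivAt_kirchhoff (hf : ContDiff ℝ 1 f) (x : E3) {t : ℝ} (ht : 0 < t) :
    HasDerivAt (fun t' => 1 / (4 * π * t') * ∫ y in Metric.sphere x t', f y ∂μH[2])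
      ((4 * π)⁻¹ * (sphericalIntegral f x t + t * sphericalIntegralDeriv f x t)) t := by
  have hmean : (fun t' => (4 * π)⁻¹ * (t' * sphericalIntegral f x t')) =ᶠ[𝓝 t]
      fun t' => 1 / (4 * π * t') * ∫ y in Metric.sphere x t', f y ∂μH[2] := by
    filter_upwards [Ioi_mem_nhds ht] with t' ht'
    rw [setIntegral_sphere_eq_rpow_smul zero_le_two x ht', Real.rpow_two, smul_eq_mul]
    field_simp
    rfl
  have := ((hasDerivAt_id t).mul (hasDerivAt_sphericalIntegral hf x t)).const_mul (4 * π)⁻¹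
  simpa using this.congr_of_eventuallyEq hmean.symm

theorem hasDerivAt_mul_RP (hf : ContDiff ℝ 1 f) (r : ℝ) {θ : E3} (hθ : θ ≠ 0) (t : ℝ) :
    HasDerivAt (fun t' => t' * RP r f θ t')
      (∫ α in circleSet θ,
        (sphericalIntegral f (r • α) t + t * sphericalIntegralDeriv f (r • α) t) ∂μH[1]) t := by
  have hRP : (fun t' => t' * RP r f θ t') =
      fun t' => ∫ α in circleSet θ, t' * sphericalIntegral f (r • α) t' ∂μH[1] :=
    funext fun t' => (integral_const_mul t' _).symm
  have hS := continuous_sphericalIntegral hf.continuous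
  have hS' := continuous_sphericalIntegralDeriv hf
  rw [hRP]
  refine hasDerivAt_setIntegral_of_continuous_uncurry
    (F := fun s α => s * sphericalIntegral f (r • α) s)
    (F' := fun s α => sphericalIntegral f (r • α) s + s * sphericalIntegralDeriv f (r • α) s)
    (fun s => ?_) ?_ (fun s α => ?_) (isCompact_circleSet θ)
    (hausdorffMeasure_circleSet_lt_top hθ).ne t
  · fun_prop
  · fun_prop
  · exact ((hasDerivAt_id' s).mul (hasDerivAt_sphericalIntegral hf (r • α) s)).congr_deriv
      (by rw [one_mul])

end SphericalIntegral

theorem stmt14_general (r : ℝ) (f : E3 → ℝ) (hf : ContDiff ℝ (⊤:ℕ∞) f)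
    (p : E3 → ℝ → ℝ)
    (hp : ∀ (x : E3) (t : ℝ), 0 < t →
      p x t = deriv (fun t' => (1 / (4 * π * t')) * ∫ y in Metric.sphere x t', f y ∂μH[2]) t) :
    ∀ θ ∈ Metric.sphere (0:E3) 1, ∀ t : ℝ, 0 < t →
      (1 / (2 * π)) * (∫ α in circleSet θ, p (r • α) t ∂μH[1])
        = (1 / (8 * π^2)) * deriv (fun t' => t' * RP r f θ t') t := by
  intro θ hθ t ht
  have hf1 : ContDiff ℝ 1 f := hf.of_le (by norm_cast)
  have hθ0 : θ ≠ 0 := by rintro rfl; simp at hθ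
  have hp' : ∀ α : E3, p (r • α) t =
      (4 * π)⁻¹ * (sphericalIntegral f (r • α) t + t * sphericalIntegralDeriv f (r • α) t) :=
    fun α => (hp _ t ht).trans (hasDerivAt_kirchhoff hf1 _ ht).deriv
  simp only [hp', integral_const_mul, (hasDerivAt_mul_RP hf1 r hθ0 t).deriv]
  field_simp
  ring

/-- the circular-detector data of the Kirchhoff solution equals
`(1/(8π²)) ∂ₜ(t R_P f(θ,t))`. -/
theorem stmt14 (r : ℝ) (hr : 0 < r) (f : E3 → ℝ) (hf : ContDiff ℝ (⊤:ℕ∞) f)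
    (hsupp : HasCompactSupport f)
    (p : E3 → ℝ → ℝ)
    (hp : ∀ (x : E3) (t : ℝ), 0 < t →
      p x t = deriv (fun t' => (1 / (4 * π * t')) * ∫ y in Metric.sphere x t', f y ∂μH[2]) t) :
    ∀ θ ∈ Metric.sphere (0:E3) 1, ∀ t : ℝ, 0 < t →
      (1 / (2 * π)) * (∫ α in circleSet θ, p (r • α) t ∂μH[1])
        = (1 / (8 * π^2)) * deriv (fun t' => t' * RP r f θ t') t :=
  stmt14_general r f hf p hp
end
end
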